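/- Let E be a real normed space, let τ be a linear topology on E weaker than the norm topology, and let F be a subspace of E. The following are equivalent: (i) 0 is τ-separated from the set S_F = {f ∈ F : ‖f‖ = 1}; (ii) the topology induced by τ on F coincides with the norm topology on F; (iii) the seminorm ρ_F(e) = dist(e, F) = inf{‖e − f‖ : f ∈ F} is τ-complementary on E. -/

import Mathlib

/-!
Separation of `0` from a set `A` means `0 ∉ closure[τ] A`.

(i) ⇒ (ii): a balanced `τ`-neighbourhood of `0` missing the unit sphere of `F` cannot contain a
point `f ∈ F` with `‖f‖ ≥ 1`, since it would also contain `‖f‖⁻¹ • f`. So the unit ball of `F` is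
a `τ`-neighbourhood of `0`, the norm is `τ`-continuous on `F`, and `τ` is finer than the norm
on `F`.

(ii) ⇒ (iii): then `0` is `τ`-separated from `A = {f ∈ F : ‖f‖ ≥ 1/2}`. In a topological group
this separation survives thickening `A` by some `τ`-neighbourhood of `0`, and that
neighbourhood contains a norm ball of radius `r` because `τ` is weaker than the norm. A unit
vector at distance `δ ≤ min (r/2) (1/4)` from `F` lies in this thickening.
-/

open Topology

/-- The norm topology on a seminormed group (the topology of its canonical uniformity). -/
def normTopology (E : Type*) [SeminormedAddCommGroup E] : TopologicalSpace E :=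
  UniformSpace.toTopologicalSpace

open Set Metric Filter Pointwise

theorem exists_isOpen_inter_eq_empty_iff {X : Type*} [t : TopologicalSpace X] {x : X}
    {s : Set X} : (∃ U : Set X, IsOpen U ∧ x ∈ U ∧ U ∩ s = ∅) ↔ x ∉ closure s := by
  simp only [_root_.mem_closure_iff, not_forall, not_nonempty_iff_eq_empty, exists_prop]

theorem mem_closure_induced_preimage_iff {X : Type*} (t : TopologicalSpace X) {s : Set X}
    (x : s) (u : Set X) :
    x ∈ closure[t.induced Subtype.val] (Subtype.val ⁻¹' u) ↔ (x : X) ∈ closure[t] (s ∩ u) := by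
  rw [closure_induced, Subtype.image_preimage_coe]

theorem exists_nhds_zero_notMem_closure_add {G : Type*} [TopologicalSpace G] [AddGroup G]
    [IsTopologicalAddGroup G] {A : Set G} (hA : (0 : G) ∉ closure A) :
    ∃ W ∈ 𝓝 (0 : G), (0 : G) ∉ closure (A + W) := by
  obtain ⟨V, hV, hVA⟩ : ∃ V ∈ 𝓝 (0 : G), V ∩ A = ∅ := by
    simpa [mem_closure_iff_nhds, not_nonempty_iff_eq_empty] using hA
  obtain ⟨W, hW, hWV⟩ := exists_nhds_half_neg hV
  refine ⟨W, hW, fun h ↦ ?_⟩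
  obtain ⟨_, hxW, a, ha, w, hw, rfl⟩ := mem_closure_iff_nhds.mp h W hW
  have : a ∈ V ∩ A := ⟨by simpa using hWV _ hxW w hw, ha⟩
  simp [hVA] at this

theorem Seminorm.continuous_of_zero_notMem_closure {E : Type*} [AddCommGroup E] [Module ℝ E]
    [TopologicalSpace E] [IsTopologicalAddGroup E] [ContinuousSMul ℝ E] {p : Seminorm ℝ E}
    (hp : (0 : E) ∉ closure {x | p x = 1}) : Continuous p := by
  obtain ⟨U, hU, hUp⟩ : ∃ U ∈ 𝓝 (0 : E), U ∩ {x | p x = 1} = ∅ := by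
    simpa [mem_closure_iff_nhds, not_nonempty_iff_eq_empty] using hp
  obtain ⟨V, ⟨hV, hVbal⟩, hVU⟩ := (nhds_basis_balanced ℝ E).mem_iff.mp hU
  refine p.continuous (r := 1) (mem_of_superset hV fun x hx ↦ ?_)
  rw [p.mem_ball_zero]
  by_contra! hpx
  have hpos : 0 < p x := one_pos.trans_le hpx
  have hnorm : ‖(p x)⁻¹‖ = (p x)⁻¹ := by rw [Real.norm_eq_abs, abs_of_pos (inv_pos.mpr hpos)]
  have hscaled : (p x)⁻¹ • x ∈ U ∩ {x | p x = 1} := by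
    refine ⟨hVU (hVbal.smul_mem ?_ hx), ?_⟩
    · exact hnorm.trans_le (inv_le_one_of_one_le₀ hpx)
    · rw [mem_ofPred_eq, map_smul_eq_mul, hnorm, inv_mul_cancel₀ hpos.ne']
  simp [hUp] at hscaled

theorem le_normTopology_of_continuous_norm {F : Type*} [SeminormedAddCommGroup F]
    {t : TopologicalSpace F} [@IsTopologicalAddGroup F t _]
    (hnorm : @Continuous F ℝ t _ norm) : t ≤ normTopology F := by
  intro s hs
  refine @isOpen_iff_forall_mem_open F t s |>.mpr fun x hx ↦ ?_
  obtain ⟨ε, hε, hball⟩ := Metric.isOpen_iff.mp hs x hx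
  refine ⟨ball x ε, hball, ?_, mem_ball_self hε⟩
  simp_rw [ball, dist_eq_norm]
  exact isOpen_lt (hnorm.comp (continuous_sub_right x)) continuous_const

theorem zero_notMem_closure_inter_setOf_le_norm {E : Type*} [SeminormedAddCommGroup E]
    [Module ℝ E] {τ : TopologicalSpace E} {F : Submodule ℝ E}
    (hF : τ.induced Subtype.val ≤ normTopology F) {c : ℝ} (hc : 0 < c) :
    (0 : E) ∉ closure[τ] (F ∩ {f | c ≤ ‖f‖}) := by
  have hclosed : IsClosed[τ.induced Subtype.val] (Subtype.val ⁻¹' {f : E | c ≤ ‖f‖}) :=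
    isClosed_le continuous_const (continuous_id_of_le hF).norm
  intro h0
  have : (0 : F) ∈ Subtype.val ⁻¹' {f : E | c ≤ ‖f‖} :=
    hclosed.closure_subset ((mem_closure_induced_preimage_iff τ (0 : F) _).mpr h0)
  simp [hc.not_ge] at this

theorem exists_pos_zero_notMem_closure_add_ball {E : Type*} [SeminormedAddCommGroup E]
    {τ : TopologicalSpace E} [@IsTopologicalAddGroup E τ _] (hle : normTopology E ≤ τ)
    {A : Set E} (hA : (0 : E) ∉ closure[τ] A) :
    ∃ r > 0, (0 : E) ∉ closure[τ] (A + ball 0 r) := by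
  obtain ⟨W, hW, hAW⟩ := exists_nhds_zero_notMem_closure_add hA
  obtain ⟨r, hr, hrW⟩ := Metric.mem_nhds_iff.mp (nhds_mono hle hW)
  exact ⟨r, hr, fun h ↦ hAW (closure_mono (add_subset_add_left hrW) h)⟩

theorem setOf_norm_eq_one_infDist_le_subset_add_ball {E : Type*} [SeminormedAddCommGroup E]
    {s : Set E} (hs : s.Nonempty) {c δ r : ℝ} (hδr : δ < r) (hcδ : c + δ < 1) :
    {e : E | ‖e‖ = 1 ∧ infDist e s ≤ δ} ⊆ s ∩ {f | c ≤ ‖f‖} + ball 0 r := by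
  rintro e ⟨he, hes⟩
  obtain ⟨f, hf, hef⟩ :=
    (infDist_lt_iff hs).mp (hes.trans_lt (lt_min hδr (by linarith : δ < 1 - c)))
  rw [dist_eq_norm, lt_min_iff] at hef
  refine ⟨f, ⟨hf, ?_⟩, e - f, mem_ball_zero_iff.mpr hef.1, add_sub_cancel f e⟩
  have := norm_sub_norm_le e f
  show c ≤ ‖f‖
  linarith [hef.2]

/-- For a subspace `F` of a real normed space `E` and a linear topology `τ` on `E` weaker
than the norm topology, the following are equivalent: (i) `0` is `τ`-separated from the
unit sphere of `F`; (ii) the topology induced by `τ` on `F` coincides with the norm topology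
of `F`; (iii) the distance-to-`F` seminorm `e ↦ dist(e, F)` is `τ`-complementary on `E`. -/
theorem subspace_separated_tfae
    {E : Type*} [NormedAddCommGroup E] [NormedSpace ℝ E]
    (τ : TopologicalSpace E)
    (hτgrp : @IsTopologicalAddGroup E τ _) (hτsmul : @ContinuousSMul ℝ E _ _ τ)
    (hτweak : ∀ s : Set E, IsOpen[τ] s → IsOpen[normTopology E] s)
    (F : Submodule ℝ E) :
    List.TFAE
      [ ∃ U : Set E, IsOpen[τ] U ∧ (0 : E) ∈ U ∧
          U ∩ {f : E | f ∈ F ∧ ‖f‖ = 1} = ∅,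
        TopologicalSpace.induced (Subtype.val : F → E) τ = normTopology F,
        ∃ δ > 0, ∃ U : Set E, IsOpen[τ] U ∧ (0 : E) ∈ U ∧
          U ∩ {e : E | ‖e‖ = 1 ∧ Metric.infDist e (F : Set E) ≤ δ} = ∅ ] := by
  have hle : normTopology E ≤ τ := hτweak
  -- `τ` is a local instance here, so the subtype topology of `F` is `τ.induced Subtype.val`.
  simp only [exists_isOpen_inter_eq_empty_iff (t := τ)]
  tfae_have 1 → 2 := fun h ↦ by
    refine le_antisymm (le_normTopology_of_continuous_norm ?_) (induced_mono hle)
    exact (normSeminorm ℝ F).continuous_of_zero_notMem_closure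
      ((mem_closure_induced_preimage_iff τ 0 {e | ‖e‖ = 1}).not.mpr h)
  tfae_have 2 → 3 := fun h ↦ by
    obtain ⟨r, hr, hsep⟩ := exists_pos_zero_notMem_closure_add_ball hle
      (zero_notMem_closure_inter_setOf_le_norm h.le one_half_pos)
    refine ⟨min (r / 2) (1 / 4), by positivity, fun h0 ↦ hsep (closure_mono ?_ h0)⟩
    exact setOf_norm_eq_one_infDist_le_subset_add_ball ⟨0, F.zero_mem⟩
      ((min_le_left _ _).trans_lt (half_lt_self hr))
      (by linarith [min_le_right (r / 2) (1 / 4 : ℝ)])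
  tfae_have 3 → 1 := by
    rintro ⟨δ, hδ, h⟩ h0
    refine h (closure_mono (fun f hf ↦ ?_) h0)
    exact ⟨hf.2, (infDist_zero_of_mem hf.1).trans_le hδ.le⟩
  tfae_finish
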